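/- Let D be a real graded division algebra over an abelian group G with D_e finite-dimensional. Then the center Z(D) is a graded subalgebra of D, and its support equals the radical of the alternating bicharacter β, rad β = {s ∈ K | β(s,t) = 1 for all t ∈ K}. -/

import Mathlib

/-!
Multiplication by a homogeneous element shifts degrees, so the homogeneous components of a central
element are central, and an element is central as soon as it commutes with `D_e` and with every
`X_t`. If `c ∈ D_s` is central and nonzero, then `X_s = f⁻¹ c` with `f ∈ D_e`, which gives the
radical conditions. Conversely, if every `X_t` centralizes `D_e`, then `X_s` itself is central.
Otherwise `D_e` is commutative, hence a field of degree at most `2` over `ℝ`, so conjugations by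
homogeneous units act on it through at most one nontrivial automorphism, an involution. Averaging
`z X_s` (`z ∈ D_e`) over conjugation by a non-centralizing `X_{t₀}` then gives a central element of
`D_s`, which is nonzero for `z = 1` or for some `z` not commuting with `X_{t₀}`.
-/

variable {G : Type*} [CommGroup G] [DecidableEq G] {D : Type*} [Ring D] [Algebra ℝ D]

/-- A real graded division algebra. -/
def IsGDA (comp : G → Submodule ℝ D) : Prop :=
  DirectSum.IsInternal comp ∧ (1 : D) ∈ comp 1 ∧
    (∀ (g h : G) (a b : D), a ∈ comp g → b ∈ comp h → a * b ∈ comp (g * h)) ∧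
    ∀ (g : G) (a : D), a ∈ comp g → a ≠ 0 → IsUnit a

open Module

theorem finrank_real_le_two {F : Type*} [Field F] [Algebra ℝ F] [FiniteDimensional ℝ F] :
    finrank ℝ F ≤ 2 := by
  have : Algebra.IsAlgebraic ℝ F := Algebra.IsAlgebraic.of_finite ℝ F
  let f : F →ₐ[ℝ] ℂ := IsAlgClosed.lift
  calc finrank ℝ F ≤ finrank ℝ ℂ :=
        LinearMap.finrank_le_finrank_of_injective (f := f.toLinearMap) f.toRingHom.injective
    _ = 2 := Complex.finrank_real_complex

namespace AlgHom

variable {K F : Type*} [Field K] [Field F] [Algebra K F] [FiniteDimensional K F]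

theorem eq_of_ne_id_of_finrank_le_two (hF : finrank K F ≤ 2) {σ τ : F →ₐ[K] F}
    (hσ : σ ≠ AlgHom.id K F) (hτ : τ ≠ AlgHom.id K F) : σ = τ := by
  by_contra hστ
  have : Fintype (F →ₐ[K] F) := Fintype.ofFinite _
  have h3 : 2 < Fintype.card (F →ₐ[K] F) :=
    Fintype.two_lt_card_iff.2 ⟨_, _, _, hσ.symm, hτ.symm, hστ⟩
  have := (Nat.card_eq_fintype_card (α := F →ₐ[K] F)) ▸ card_algHom_le_finrank K F F
  omega

theorem comp_eq_id_of_ne_id_of_finrank_le_two (hF : finrank K F ≤ 2) {σ τ : F →ₐ[K] F}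
    (hσ : σ ≠ AlgHom.id K F) (hτ : τ ≠ AlgHom.id K F) : σ.comp τ = AlgHom.id K F := by
  obtain rfl := eq_of_ne_id_of_finrank_le_two hF hσ hτ
  by_contra hσσ
  apply hσ
  ext x
  exact σ.toRingHom.injective (congrArg (· x) (eq_of_ne_id_of_finrank_le_two hF hσσ hσ))

end AlgHom

theorem Commute.units_conj {M : Type*} [Monoid M] (u : Mˣ) {a b : M} (h : Commute a b) :
    Commute (↑u * a * ↑u⁻¹) (↑u * b * ↑u⁻¹) := by
  simp only [Commute, SemiconjBy, mul_assoc, Units.inv_mul_cancel_left, ← mul_assoc a, h.eq]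

theorem Units.commute_add_conj {R : Type*} [Ring R] (x : Rˣ) {w : R}
    (h : Commute ((x : R) * x) w) : Commute (x : R) (w + x * w * ↑x⁻¹) := by
  have : (x : R) * (x * w * ↑x⁻¹) = w * x := by
    rw [← mul_assoc, ← mul_assoc, h.eq, mul_assoc, Units.mul_inv_cancel_right]
  simp only [Commute, SemiconjBy, mul_add, add_mul, this, Units.inv_mul_cancel_right, add_comm]

theorem Units.commute_of_add_conj_eq_zero {R : Type*} [Ring R] {x w : Rˣ} {y : R}
    (hw : (w : R) + x * w * ↑x⁻¹ = 0) (hyw : y * w + x * (y * w) * ↑x⁻¹ = 0) :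
    Commute (x : R) y := by
  have hconj : (x : R) * (y * w) * ↑x⁻¹ = (x * y * ↑x⁻¹) * (x * w * ↑x⁻¹) := by
    simp only [mul_assoc, Units.inv_mul_cancel_left]
  rw [hconj, eq_neg_of_add_eq_zero_right hw, mul_neg, ← sub_eq_add_neg, sub_eq_zero,
    w.isUnit.mul_left_inj] at hyw
  exact (Units.mul_inv_eq_iff_eq_mul x).1 hyw.symm

namespace IsGDA

variable {comp : G → Submodule ℝ D}

theorem one_mem (h : IsGDA comp) : (1 : D) ∈ comp 1 := h.2.1

theorem mul_mem (h : IsGDA comp) {g g' : G} {a b : D} (ha : a ∈ comp g) (hb : b ∈ comp g') :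
    a * b ∈ comp (g * g') :=
  h.2.2.1 g g' a b ha hb

theorem isUnit (h : IsGDA comp) {g : G} {a : D} (ha : a ∈ comp g) (ha0 : a ≠ 0) : IsUnit a :=
  h.2.2.2 g a ha ha0

/-- Mathlib's graded rings are indexed by additive monoids, hence `Additive G`. -/
noncomputable abbrev gradedRing (h : IsGDA comp) : GradedRing (comp ∘ Additive.toMul) :=
  letI : SetLike.GradedMonoid (comp ∘ Additive.toMul) :=
    { one_mem := h.one_mem, mul_mem := fun _ _ _ _ ha hb => h.mul_mem ha hb }
  { toDecomposition := h.1.chooseDecomposition }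

theorem inv_mem (h : IsGDA comp) {g : G} {u : Dˣ} (hu : (u : D) ∈ comp g) :
    (↑u⁻¹ : D) ∈ comp g⁻¹ := by
  let _ := h.gradedRing
  have hcomp := DirectSum.coe_decompose_mul_add_of_left_mem
    (comp ∘ Additive.toMul) (i := .ofMul g) (j := .ofMul g⁻¹) (b := (↑u⁻¹ : D)) hu
  rw [Units.mul_inv, ← ofMul_mul, mul_inv_cancel, ofMul_one,
    DirectSum.decompose_of_mem_same (comp ∘ Additive.toMul) (i := 0) h.one_mem] at hcomp
  rw [Units.inv_eq_of_mul_eq_one_right hcomp.symm]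
  exact Submodule.coe_mem _

theorem mul_inv_mem_one (h : IsGDA comp) {g : G} {a : D} {u : Dˣ} (ha : a ∈ comp g)
    (hu : (u : D) ∈ comp g) : a * ↑u⁻¹ ∈ comp 1 :=
  mul_inv_cancel g ▸ h.mul_mem ha (h.inv_mem hu)

theorem conj_mem (h : IsGDA comp) {g g' : G} {a : D} {u : Dˣ} (hu : (u : D) ∈ comp g)
    (ha : a ∈ comp g') : ↑u * a * ↑u⁻¹ ∈ comp g' := by
  simpa [mul_comm g g'] using h.mul_mem (h.mul_mem hu ha) (h.inv_mem hu)

theorem mem_center_of_forall_commute (h : IsGDA comp) {x : D}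
    (hx : ∀ g, ∀ a ∈ comp g, Commute x a) : x ∈ Subalgebra.center ℝ D := by
  classical
  let _ := h.gradedRing
  refine Subalgebra.mem_center_iff.2 fun b => ?_
  rw [← DirectSum.sum_support_decompose (comp ∘ Additive.toMul) b]
  exact (Commute.sum_right _ _ _ fun i _ => hx _ _ (Submodule.coe_mem _)).symm

theorem center_eq_iSup (h : IsGDA comp) :
    (Subalgebra.center ℝ D).toSubmodule = ⨆ g, comp g ⊓ (Subalgebra.center ℝ D).toSubmodule := by
  classical
  let _ := h.gradedRing
  refine le_antisymm (fun c hc => ?_) (iSup_le fun g => inf_le_right)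
  rw [← DirectSum.sum_support_decompose (comp ∘ Additive.toMul) c]
  refine Submodule.sum_mem _ fun i _ => Submodule.mem_iSup_of_mem i.toMul ⟨Submodule.coe_mem _, ?_⟩
  refine h.mem_center_of_forall_commute fun g a ha => ?_
  have hca := DirectSum.coe_decompose_mul_add_of_right_mem
    (comp ∘ Additive.toMul) (i := i) (j := .ofMul g) (a := c) ha
  have hac := DirectSum.coe_decompose_mul_add_of_left_mem
    (comp ∘ Additive.toMul) (i := .ofMul g) (j := i) (b := c) ha
  rw [(Subalgebra.mem_center_iff (R := ℝ)).1 hc a, add_comm] at hac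
  exact hca.symm.trans hac

theorem mem_center_of_commute_one_of_commute_family (h : IsGDA comp) {T : Subgroup G}
    (hT : ∀ g, comp g ≠ ⊥ → g ∈ T) {X : T → Dˣ} (hX : ∀ t : T, (X t : D) ∈ comp t) {x : D}
    (hxE : ∀ z ∈ comp 1, Commute x z) (hxX : ∀ t, Commute x (X t)) :
    x ∈ Subalgebra.center ℝ D := by
  refine h.mem_center_of_forall_commute fun g a ha => ?_
  by_cases hg : comp g = ⊥
  · rw [(Submodule.eq_bot_iff _).1 hg a ha]
    exact Commute.zero_right x
  · rw [← Units.inv_mul_cancel_right a (X ⟨g, hT g hg⟩)]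
    exact (hxE _ (h.mul_inv_mem_one ha (hX ⟨g, hT g hg⟩))).mul_right (hxX _)

theorem commute_one_conj (h : IsGDA comp) {g : G} {u : Dˣ} (hu : (u : D) ∈ comp g) {a : D}
    (haE : ∀ z ∈ comp 1, Commute a z) : ∀ z ∈ comp 1, Commute (↑u * a * ↑u⁻¹) z := by
  intro z hz
  simpa [mul_assoc] using (haE _ (h.conj_mem (h.inv_mem hu) hz)).units_conj u

theorem commute_homogeneous_conj (h : IsGDA comp) {g : G} {u : Dˣ} (hu : (u : D) ∈ comp g)
    {w : D} (hwK : ∀ g', ∀ a ∈ comp g', (∀ z ∈ comp 1, Commute a z) → Commute w a) :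
    ∀ g', ∀ a ∈ comp g', (∀ z ∈ comp 1, Commute a z) → Commute (↑u * w * ↑u⁻¹) a := by
  intro g' a ha haE
  have := hwK g' _ (h.conj_mem (h.inv_mem hu) ha) (h.commute_one_conj (h.inv_mem hu) haE)
  simpa [mul_assoc] using this.units_conj u

theorem commute_one_of_mem (h : IsGDA comp) (hE : ∀ a ∈ comp 1, ∀ b ∈ comp 1, Commute a b)
    {g : G} {u : Dˣ} (hu : (u : D) ∈ comp g) (huE : ∀ z ∈ comp 1, Commute (u : D) z) {b : D}
    (hb : b ∈ comp g) : ∀ z ∈ comp 1, Commute b z := by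
  intro z hz
  rw [← Units.inv_mul_cancel_right b u]
  exact (hE _ (h.mul_inv_mem_one hb hu) z hz).mul_left (huE z hz)

theorem commute_of_inf_center_ne_bot (h : IsGDA comp) {T : Subgroup G} {X : T → Dˣ}
    (hX : ∀ t : T, (X t : D) ∈ comp t)
    (hXE : ¬ (∀ a ∈ comp 1, ∀ b ∈ comp 1, Commute a b) →
      ∀ t : T, ∀ z ∈ comp 1, Commute (X t : D) z)
    {s : T} (hs : comp s ⊓ (Subalgebra.center ℝ D).toSubmodule ≠ ⊥) :
    (∀ z ∈ comp 1, Commute (X s : D) z) ∧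
      ∀ t, (∀ z ∈ comp 1, Commute (X t : D) z) → Commute (X s : D) (X t) := by
  obtain ⟨c, ⟨hcs, hcZ⟩, hc0⟩ := Submodule.exists_mem_ne_zero_of_ne_bot hs
  obtain ⟨c, rfl⟩ := h.isUnit hcs hc0
  have hcZ' (b : D) : Commute (c : D) b := ((Subalgebra.mem_center_iff (R := ℝ)).1 hcZ b).symm
  refine ⟨?_, fun t ht => ?_⟩
  · by_cases hE : ∀ a ∈ comp 1, ∀ b ∈ comp 1, Commute a b
    · exact h.commute_one_of_mem hE hcs (fun z _ => hcZ' z) (hX s)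
    · exact hXE hE s
  · set f := c * (X s)⁻¹
    have hXs : (X s : D) = ↑f⁻¹ * c := by simp [f]
    rw [hXs]
    exact (ht f (h.mul_inv_mem_one hcs (hX s))).symm.units_inv_left.mul_left (hcZ' _)

def oneSubalgebra (h : IsGDA comp) : Subalgebra ℝ D :=
  (comp 1).toSubalgebra h.one_mem fun _ _ hx hy => one_mul (1 : G) ▸ h.mul_mem hx hy

noncomputable abbrev oneField (h : IsGDA comp) [Nontrivial D]
    (hE : ∀ a ∈ comp 1, ∀ b ∈ comp 1, Commute a b) : Field h.oneSubalgebra :=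
  IsField.toField
    { exists_pair_ne := exists_pair_ne _
      mul_comm := fun a b => Subtype.ext (hE a a.2 b b.2)
      mul_inv_cancel := fun {a} ha => by
        obtain ⟨u, hu⟩ := h.isUnit a.2 fun h0 => ha (Subtype.ext h0)
        have hu1 : (u : D) ∈ comp 1 := hu ▸ a.2
        have hinv : (↑u⁻¹ : D) ∈ comp 1 := by simpa using h.inv_mem hu1
        exact ⟨⟨↑u⁻¹, hinv⟩, Subtype.ext (show (a : D) * ↑u⁻¹ = 1 by rw [← hu, Units.mul_inv])⟩ }

noncomputable def conjOne (h : IsGDA comp) {g : G} {u : Dˣ} (hu : (u : D) ∈ comp g) :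
    h.oneSubalgebra →ₐ[ℝ] h.oneSubalgebra :=
  ((MulSemiringAction.toAlgHom ℝ D (ConjAct.toConjAct u)).comp h.oneSubalgebra.val).codRestrict
    _ fun z => h.conj_mem hu z.2

theorem coe_conjOne (h : IsGDA comp) {g : G} {u : Dˣ} (hu : (u : D) ∈ comp g)
    (z : h.oneSubalgebra) : (h.conjOne hu z : D) = u * z * ↑u⁻¹ :=
  rfl

theorem commute_one_mul_of_not_commute_one (h : IsGDA comp) (hfd : FiniteDimensional ℝ (comp 1))
    (hE : ∀ a ∈ comp 1, ∀ b ∈ comp 1, Commute a b) {g g' : G} {u v : Dˣ}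
    (hu : (u : D) ∈ comp g) (hv : (v : D) ∈ comp g')
    (huE : ¬ ∀ z ∈ comp 1, Commute (u : D) z) (hvE : ¬ ∀ z ∈ comp 1, Commute (v : D) z) :
    ∀ z ∈ comp 1, Commute ((u : D) * v) z := by
  obtain ⟨z₀, -, hz₀⟩ : ∃ z ∈ comp 1, ¬ Commute (u : D) z := by simpa using huE
  have : Nontrivial D := nontrivial_of_ne _ _ hz₀
  -- `D_e` is a field of degree `≤ 2` over `ℝ`, so it has at most one nontrivial automorphism.
  let _ := h.oneField hE
  have : FiniteDimensional ℝ h.oneSubalgebra := hfd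
  have hconj {g : G} {w : Dˣ} (hw : (w : D) ∈ comp g) (hwE : ¬ ∀ z ∈ comp 1, Commute (w : D) z) :
      h.conjOne hw ≠ AlgHom.id ℝ _ := fun hid => hwE fun z hz =>
    (Units.mul_inv_eq_iff_eq_mul w).1 (congrArg Subtype.val (AlgHom.congr_fun hid ⟨z, hz⟩))
  have hid := AlgHom.comp_eq_id_of_ne_id_of_finrank_le_two finrank_real_le_two
    (hconj hu huE) (hconj hv hvE)
  intro z hz
  have := congrArg Subtype.val (AlgHom.congr_fun hid ⟨z, hz⟩)
  refine (Units.mul_inv_eq_iff_eq_mul (u * v)).1 ?_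
  simpa [coe_conjOne, mul_assoc] using this

theorem commute_homogeneous_of_commute_one (h : IsGDA comp)
    (hE : ∀ a ∈ comp 1, ∀ b ∈ comp 1, Commute a b) {T : Subgroup G}
    (hT : ∀ g, comp g ≠ ⊥ → g ∈ T) {X : T → Dˣ} (hX : ∀ t : T, (X t : D) ∈ comp t) {x : D}
    (hxE : ∀ z ∈ comp 1, Commute x z)
    (hxK : ∀ t, (∀ z ∈ comp 1, Commute (X t : D) z) → Commute x (X t)) :
    ∀ g, ∀ a ∈ comp g, (∀ z ∈ comp 1, Commute a z) → Commute x a := by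
  intro g a ha haE
  rcases eq_or_ne a 0 with rfl | ha0
  · exact Commute.zero_right x
  have hg : g ∈ T := hT g fun hbot => ha0 ((Submodule.eq_bot_iff _).1 hbot a ha)
  obtain ⟨u, rfl⟩ := h.isUnit ha ha0
  have hXE := h.commute_one_of_mem hE ha haE (hX ⟨g, hg⟩)
  rw [← Units.inv_mul_cancel_right (u : D) (X ⟨g, hg⟩)]
  exact (hxE _ (h.mul_inv_mem_one ha (hX ⟨g, hg⟩))).mul_right (hxK _ hXE)

theorem add_conj_mem_center (h : IsGDA comp) (hfd : FiniteDimensional ℝ (comp 1))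
    (hE : ∀ a ∈ comp 1, ∀ b ∈ comp 1, Commute a b) {T : Subgroup G}
    (hT : ∀ g, comp g ≠ ⊥ → g ∈ T) {X : T → Dˣ} (hX : ∀ t : T, (X t : D) ∈ comp t) {t₀ : T}
    (ht₀ : ¬ ∀ z ∈ comp 1, Commute (X t₀ : D) z) {w : D} (hwE : ∀ z ∈ comp 1, Commute w z)
    (hwK : ∀ g, ∀ a ∈ comp g, (∀ z ∈ comp 1, Commute a z) → Commute w a) :
    w + X t₀ * w * ↑(X t₀)⁻¹ ∈ Subalgebra.center ℝ D := by
  set x := X t₀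
  have hx : (x : D) ∈ comp t₀ := hX t₀
  have hcK : ∀ g, ∀ a ∈ comp g, (∀ z ∈ comp 1, Commute a z) → Commute (w + x * w * ↑x⁻¹) a :=
    fun g a ha haE => (hwK g a ha haE).add_left (h.commute_homogeneous_conj hx hwK g a ha haE)
  have hcx : Commute (w + x * w * ↑x⁻¹) x :=
    (x.commute_add_conj (hwK _ _ (h.mul_mem hx hx)
      (h.commute_one_mul_of_not_commute_one hfd hE hx hx ht₀ ht₀)).symm).symm
  refine h.mem_center_of_commute_one_of_commute_family hT hX
    (fun z hz => (hwE z hz).add_left (h.commute_one_conj hx hwE z hz)) fun t => ?_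
  by_cases ht : ∀ z ∈ comp 1, Commute (X t : D) z
  · exact hcK _ _ (hX t) ht
  have hx' : ¬ ∀ z ∈ comp 1, Commute (↑x⁻¹ : D) z :=
    fun H => ht₀ fun z hz => by simpa using (H z hz).units_inv_left
  rw [← Units.inv_mul_cancel_right (X t : D) x]
  exact (hcK _ _ (h.mul_mem (hX t) (h.inv_mem hx))
    (h.commute_one_mul_of_not_commute_one hfd hE (hX t) (h.inv_mem hx) ht hx')).mul_right hcx

theorem inf_center_ne_bot_of_not_commute_one (h : IsGDA comp) (hfd : FiniteDimensional ℝ (comp 1))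
    (hE : ∀ a ∈ comp 1, ∀ b ∈ comp 1, Commute a b) {T : Subgroup G}
    (hT : ∀ g, comp g ≠ ⊥ → g ∈ T) {X : T → Dˣ} (hX : ∀ t : T, (X t : D) ∈ comp t) {t₀ : T}
    (ht₀ : ¬ ∀ z ∈ comp 1, Commute (X t₀ : D) z) {s : T}
    (hsE : ∀ z ∈ comp 1, Commute (X s : D) z)
    (hsK : ∀ t, (∀ z ∈ comp 1, Commute (X t : D) z) → Commute (X s : D) (X t)) :
    comp s ⊓ (Subalgebra.center ℝ D).toSubmodule ≠ ⊥ := by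
  obtain ⟨y, hy, hxy⟩ : ∃ y ∈ comp 1, ¬ Commute (X t₀ : D) y := by simpa using ht₀
  have hsK' := h.commute_homogeneous_of_commute_one hE hT hX hsE hsK
  have hc : ∀ z ∈ comp 1, z * X s + X t₀ * (z * X s) * ↑(X t₀)⁻¹ ∈
      comp s ⊓ (Subalgebra.center ℝ D).toSubmodule := by
    intro z hz
    have hw : z * X s ∈ comp s := by simpa using h.mul_mem hz (hX s)
    refine ⟨add_mem hw (h.conj_mem (hX t₀) hw), h.add_conj_mem_center hfd hE hT hX ht₀
      (fun z' hz' => (hE z hz z' hz').mul_left (hsE z' hz')) ?_⟩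
    exact fun g a ha haE => (haE z hz).symm.mul_left (hsK' g a ha haE)
  rw [Submodule.ne_bot_iff]
  by_contra! H
  exact hxy (Units.commute_of_add_conj_eq_zero (by simpa using H _ (hc 1 h.one_mem))
    (H _ (hc y hy)))

end IsGDA

/-- The center `Z(D)` of a real graded division algebra with finite-dimensional
identity component is a graded subalgebra, and its support is the radical of the
alternating bicharacter `β`, i.e. the set of `s ∈ K` with `X_s X_t = X_t X_s` for
all `t ∈ K`, where `K = {t ∈ T | Int(X_t)|_{D_e} = id}`. -/
theorem stmt_4 (comp : G → Submodule ℝ D) (hgda : IsGDA comp)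
    (hfd : FiniteDimensional ℝ ↥(comp (1 : G)))
    (T : Subgroup G) (hT : ∀ g : G, comp g ≠ ⊥ ↔ g ∈ T)
    (X : ↥T → Dˣ) (hX : ∀ t : ↥T, (X t : D) ∈ comp (t : G))
    -- when `D_e` is not commutative (the quaternion case), the `X_t` are chosen
    -- in the centralizer of `D_e`
    (hXcent : ¬(∀ z ∈ comp (1 : G), ∀ w ∈ comp (1 : G), z * w = w * z) →
      ∀ (t : ↥T), ∀ z ∈ comp (1 : G), (X t : D) * z = z * (X t : D)) :
    ((Subalgebra.center ℝ D).toSubmodule =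
        ⨆ g : G, comp g ⊓ (Subalgebra.center ℝ D).toSubmodule) ∧
      ∀ s : ↥T,
        (comp (s : G) ⊓ (Subalgebra.center ℝ D).toSubmodule ≠ ⊥ ↔
          ((∀ z ∈ comp (1 : G), (X s : D) * z = z * (X s : D)) ∧
            ∀ t : ↥T, (∀ z ∈ comp (1 : G), (X t : D) * z = z * (X t : D)) →
              (X s : D) * (X t : D) = (X t : D) * (X s : D))) := by
  refine ⟨hgda.center_eq_iSup, fun s => ⟨hgda.commute_of_inf_center_ne_bot hX hXcent, ?_⟩⟩
  rintro ⟨hsE, hsK⟩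
  by_cases hK : ∀ t : T, ∀ z ∈ comp 1, Commute (X t : D) z
  · obtain ⟨x, -, hx⟩ := Submodule.exists_mem_ne_zero_of_ne_bot ((hT 1).2 T.one_mem)
    have : Nontrivial D := nontrivial_of_ne x 0 hx
    have hXs := hgda.mem_center_of_commute_one_of_commute_family (fun g => (hT g).1) hX hsE
      fun t => hsK t (hK t)
    exact (Submodule.ne_bot_iff _).2 ⟨X s, ⟨hX s, hXs⟩, (X s).ne_zero⟩
  · obtain ⟨t₀, ht₀⟩ := not_forall.1 hK
    have hE : ∀ a ∈ comp 1, ∀ b ∈ comp 1, Commute a b :=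
      by_contra fun hE => ht₀ (hXcent hE t₀)
    exact hgda.inf_center_ne_bot_of_not_commute_one hfd hE (fun g => (hT g).1) hX ht₀ hsE hsK
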